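/- arXiv:2512.07112 — 2 statements merged into one kernel-verified Lean document; each statement's English description precedes it below -/
import Mathlib

section
/- Let β₂ ∈ [0,1), let n, l be positive integers with 2^l dividing n, let C ≥ 0, and let (G_s)_{s≥1} be a sequence of m×n real matrices with Frobenius norm ‖G_s‖ ≤ C for all s. With G̃_s = G_s·A^(l), Ṽ_0 = 0, Ṽ_s = β₂·Ṽ_{s−1} + (1−β₂)·(G̃_s ∘ G̃_s), R_u = G_u − G̃_u·E^(l), and V_u = Ṽ_u·E^(l) + R_u ∘ R_u (where ∘ denotes entrywise product), the reconstructed second moment satisfies ‖V_u‖ ≤ 2C² for every u ≥ 1. -/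
open scoped Matrix

/-- The fold matrix `A^(l) ∈ ℝ^{n × n/2^l}`: (using 0-based indices `i, j`, corresponding to
1-based indices `i+1, j+1`) the entry `A^(l)_{i,j}` is `1/2^l` if
`j·2^l ≤ i < (j+1)·2^l` (i.e. 1-based `(j-1)·2^l + 1 ≤ i ≤ j·2^l`) and `0` otherwise. -/
noncomputable def foldA (n l : ℕ) : Matrix (Fin n) (Fin (n / 2 ^ l)) ℝ :=
  Matrix.of fun i j =>
    if (j : ℕ) * 2 ^ l ≤ (i : ℕ) ∧ (i : ℕ) < ((j : ℕ) + 1) * 2 ^ l then (1 : ℝ) / 2 ^ l else 0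

/-- The unfold matrix `E^(l) ∈ ℝ^{n/2^l × n}`: the entry `E^(l)_{i,j}` is `1` if
`i·2^l ≤ j < (i+1)·2^l` (i.e. 1-based `(i-1)·2^l + 1 ≤ j ≤ i·2^l`) and `0` otherwise. -/
def unfoldE (n l : ℕ) : Matrix (Fin (n / 2 ^ l)) (Fin n) ℝ :=
  Matrix.of fun i j =>
    if (i : ℕ) * 2 ^ l ≤ (j : ℕ) ∧ (j : ℕ) < ((i : ℕ) + 1) * 2 ^ l then (1 : ℝ) else 0

/-- The fold-unfold operator `P^(l) = A^(l) E^(l) ∈ ℝ^{n×n}`. -/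
noncomputable def foldP (n l : ℕ) : Matrix (Fin n) (Fin n) ℝ :=
  foldA n l * unfoldE n l

-- Equip matrices with the Frobenius norm.
attribute [local instance] Matrix.frobeniusNormedAddCommGroup Matrix.frobeniusNormedSpace
  Matrix.frobeniusIsBoundedSMul

open scoped Matrix  -- Hadamard product notation ⊙

/-! The fold-unfold matrix `P = A E` replaces every entry of a row by the mean of its block, so
right multiplication by `P` is an orthogonal projection and Pythagoras gives `‖G P‖ ≤ ‖G‖` and
`‖G - G P‖ ≤ ‖G‖`. Since `E` copies every column `2^l` times, `‖Y E‖² = 2^l ‖Y‖²`; hence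
`‖G̃‖² ≤ C² / 2^l`. With `‖X ⊙ X‖ ≤ ‖X‖²`, every `G̃ ⊙ G̃` lies in the ball of radius `C² / 2^l`,
and so does its exponential moving average `Ṽ`, being a convex combination. Therefore
`‖Ṽ E‖ ≤ C² / √(2^l) ≤ C²`, while `‖R ⊙ R‖ ≤ ‖R‖² ≤ C²`. -/

open Matrix

namespace Matrix

variable {ι κ α : Type*} [Fintype ι] [Fintype κ]

theorem frobenius_norm_sq_eq [NormedAddCommGroup α] (A : Matrix ι κ α) :
    ‖A‖ ^ 2 = ∑ i, ∑ j, ‖A i j‖ ^ 2 := by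
  rw [frobenius_norm_def, ← Real.sqrt_eq_rpow, Real.sq_sqrt (by positivity)]
  simp only [Real.rpow_two]

theorem frobenius_norm_sq_eq_sum_sq (A : Matrix ι κ ℝ) : ‖A‖ ^ 2 = ∑ i, ∑ j, A i j ^ 2 := by
  simp only [frobenius_norm_sq_eq, Real.norm_eq_abs, sq_abs]

theorem frobenius_norm_hadamard_le [NormedRing α] (A B : Matrix ι κ α) :
    ‖A ⊙ B‖ ≤ ‖A‖ * ‖B‖ := by
  refine (sq_le_sq₀ (norm_nonneg _) (by positivity)).1 ?_
  simp only [mul_pow, frobenius_norm_sq_eq, hadamard_apply, ← Fintype.sum_prod_type',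
    Finset.sum_mul]
  gcongr with p
  calc ‖A p.1 p.2 * B p.1 p.2‖ ^ 2 ≤ ‖A p.1 p.2‖ ^ 2 * ‖B p.1 p.2‖ ^ 2 := by
        rw [← mul_pow]; gcongr; exact norm_mul_le _ _
    _ ≤ ‖A p.1 p.2‖ ^ 2 * ∑ q : ι × κ, ‖B q.1 q.2‖ ^ 2 := by
        gcongr
        exact Finset.single_le_sum (f := fun q : ι × κ => ‖B q.1 q.2‖ ^ 2)
          (fun _ _ => by positivity) (Finset.mem_univ p)

end Matrix

theorem Convex.mem_of_ema {E : Type*} [AddCommGroup E] [Module ℝ E] {S : Set E}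
    (hS : Convex ℝ S) {β : ℝ} (hβ : β ∈ Set.Icc (0 : ℝ) 1) {x y : ℕ → E} (h0 : x 0 ∈ S)
    (hy : ∀ s, y s ∈ S) (hrec : ∀ s, 1 ≤ s → x s = β • x (s - 1) + (1 - β) • y s) :
    ∀ s, x s ∈ S
  | 0 => h0
  | s + 1 => by
    rw [hrec (s + 1) s.succ_pos, Nat.add_sub_cancel]
    exact hS (Convex.mem_of_ema hS hβ h0 hy hrec s) (hy _) hβ.1 (sub_nonneg.2 hβ.2)
      (add_sub_cancel _ _)

theorem Finset.sum_sq_eq_sum_sq_sub_mean_add {ι : Type*} (s : Finset ι) (f : ι → ℝ) :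
    ∑ i ∈ s, f i ^ 2 =
      ∑ i ∈ s, (f i - (∑ j ∈ s, f j) / s.card) ^ 2 + s.card * ((∑ j ∈ s, f j) / s.card) ^ 2 := by
  set μ := (∑ j ∈ s, f j) / s.card
  have hcentered : ∑ i ∈ s, (f i - μ) = 0 := by
    rcases s.eq_empty_or_nonempty with rfl | hs
    · simp
    · rw [sum_sub_distrib, sum_const, nsmul_eq_mul, mul_div_cancel₀ _ (by positivity), sub_self]
  calc ∑ i ∈ s, f i ^ 2 = ∑ i ∈ s, ((f i - μ) ^ 2 + 2 * μ * (f i - μ) + μ ^ 2) :=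
        sum_congr rfl fun i _ => by ring
    _ = _ := by
        rw [sum_add_distrib, sum_add_distrib, ← mul_sum, hcentered, sum_const, nsmul_eq_mul]
        ring

section Blocks

variable {n l : ℕ}

def blockEquiv (hdvd : 2 ^ l ∣ n) : Fin (n / 2 ^ l) × Fin (2 ^ l) ≃ Fin n :=
  finProdFinEquiv.trans (finCongr (Nat.div_mul_cancel hdvd))

theorem blockEquiv_apply_val (hdvd : 2 ^ l ∣ n) (b : Fin (n / 2 ^ l)) (r : Fin (2 ^ l)) :
    (blockEquiv hdvd (b, r) : ℕ) = r + 2 ^ l * b :=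
  rfl

theorem Fin.sum_univ_eq_sum_blocks {M : Type*} [AddCommMonoid M] (hdvd : 2 ^ l ∣ n)
    (f : Fin n → M) :
    ∑ j, f j = ∑ b, ∑ r, f (blockEquiv hdvd (b, r)) := by
  rw [← (blockEquiv hdvd).sum_comp, Fintype.sum_prod_type]

theorem Nat.block_bounds_iff {k b b' r : ℕ} (hr : r < k) :
    b * k ≤ r + k * b' ∧ r + k * b' < (b + 1) * k ↔ b = b' := by
  constructor
  · rintro ⟨hlo, hhi⟩
    rw [← Nat.div_eq_of_lt_le hlo hhi, Nat.add_mul_div_left _ _ (by omega),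
      Nat.div_eq_of_lt hr, zero_add]
  · rintro rfl
    constructor <;> nlinarith

theorem unfoldE_blockEquiv (hdvd : 2 ^ l ∣ n) (b b' : Fin (n / 2 ^ l)) (r : Fin (2 ^ l)) :
    unfoldE n l b (blockEquiv hdvd (b', r)) = if b = b' then 1 else 0 := by
  simp only [unfoldE, of_apply, blockEquiv_apply_val, Nat.block_bounds_iff r.isLt, Fin.val_inj]

theorem foldA_blockEquiv (hdvd : 2 ^ l ∣ n) (b b' : Fin (n / 2 ^ l)) (r : Fin (2 ^ l)) :
    foldA n l (blockEquiv hdvd (b', r)) b = if b = b' then 1 / 2 ^ l else 0 := by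
  simp only [foldA, of_apply, blockEquiv_apply_val, Nat.block_bounds_iff r.isLt, Fin.val_inj]

variable {ι : Type*}

theorem mul_unfoldE_blockEquiv (hdvd : 2 ^ l ∣ n) (Y : Matrix ι (Fin (n / 2 ^ l)) ℝ) (i : ι)
    (b : Fin (n / 2 ^ l)) (r : Fin (2 ^ l)) :
    (Y * unfoldE n l) i (blockEquiv hdvd (b, r)) = Y i b := by
  simp [mul_apply, unfoldE_blockEquiv]

theorem mul_foldA_apply (hdvd : 2 ^ l ∣ n) (X : Matrix ι (Fin n) ℝ) (i : ι) (b : Fin (n / 2 ^ l)) :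
    (X * foldA n l) i b = (∑ r, X i (blockEquiv hdvd (b, r))) / 2 ^ l := by
  rw [mul_apply, Fin.sum_univ_eq_sum_blocks hdvd]
  simp [foldA_blockEquiv, div_eq_mul_inv, Finset.sum_mul]

theorem mul_foldP_blockEquiv (hdvd : 2 ^ l ∣ n) (X : Matrix ι (Fin n) ℝ) (i : ι)
    (b : Fin (n / 2 ^ l)) (r : Fin (2 ^ l)) :
    (X * foldP n l) i (blockEquiv hdvd (b, r)) =
      (∑ r', X i (blockEquiv hdvd (b, r'))) / 2 ^ l := by
  rw [foldP, ← Matrix.mul_assoc, mul_unfoldE_blockEquiv, mul_foldA_apply hdvd]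

theorem frobenius_norm_sq_eq_sum_blocks [Fintype ι] (hdvd : 2 ^ l ∣ n) (X : Matrix ι (Fin n) ℝ) :
    ‖X‖ ^ 2 = ∑ i, ∑ b, ∑ r, X i (blockEquiv hdvd (b, r)) ^ 2 := by
  simp only [frobenius_norm_sq_eq_sum_sq, Fin.sum_univ_eq_sum_blocks hdvd]

theorem frobenius_norm_mul_unfoldE_sq [Fintype ι] (hdvd : 2 ^ l ∣ n)
    (Y : Matrix ι (Fin (n / 2 ^ l)) ℝ) :
    ‖Y * unfoldE n l‖ ^ 2 = 2 ^ l * ‖Y‖ ^ 2 := by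
  simp [frobenius_norm_sq_eq_sum_blocks hdvd, mul_unfoldE_blockEquiv, frobenius_norm_sq_eq_sum_sq,
    Finset.mul_sum]

end Blocks

section Projection

variable {n l : ℕ} {ι : Type*} [Fintype ι]

theorem frobenius_norm_sq_eq_mul_foldP_add (hdvd : 2 ^ l ∣ n) (X : Matrix ι (Fin n) ℝ) :
    ‖X‖ ^ 2 = ‖X * foldP n l‖ ^ 2 + ‖X - X * foldP n l‖ ^ 2 := by
  simp only [frobenius_norm_sq_eq_sum_blocks hdvd, Matrix.sub_apply, mul_foldP_blockEquiv hdvd,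
    ← Finset.sum_add_distrib]
  refine Fintype.sum_congr _ _ fun i => Fintype.sum_congr _ _ fun b => ?_
  rw [Finset.sum_add_distrib, Finset.sum_const, Finset.sum_sq_eq_sum_sq_sub_mean_add,
    Finset.card_univ, Fintype.card_fin, nsmul_eq_mul, add_comm]
  push_cast
  rfl

theorem frobenius_norm_mul_foldP_le (hdvd : 2 ^ l ∣ n) (X : Matrix ι (Fin n) ℝ) :
    ‖X * foldP n l‖ ≤ ‖X‖ :=
  (sq_le_sq₀ (norm_nonneg _) (norm_nonneg _)).1 <| by
    rw [frobenius_norm_sq_eq_mul_foldP_add hdvd X]; exact le_add_of_nonneg_right (sq_nonneg _)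

theorem frobenius_norm_sub_mul_foldP_le (hdvd : 2 ^ l ∣ n) (X : Matrix ι (Fin n) ℝ) :
    ‖X - X * foldP n l‖ ≤ ‖X‖ :=
  (sq_le_sq₀ (norm_nonneg _) (norm_nonneg _)).1 <| by
    rw [frobenius_norm_sq_eq_mul_foldP_add hdvd X]; exact le_add_of_nonneg_left (sq_nonneg _)

theorem two_pow_mul_frobenius_norm_mul_foldA_sq_le (hdvd : 2 ^ l ∣ n) (X : Matrix ι (Fin n) ℝ) :
    2 ^ l * ‖X * foldA n l‖ ^ 2 ≤ ‖X‖ ^ 2 := by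
  rw [← frobenius_norm_mul_unfoldE_sq hdvd, Matrix.mul_assoc, ← foldP]
  gcongr
  exact frobenius_norm_mul_foldP_le hdvd X

end Projection

theorem foam_second_moment_bound_general {m : ℕ} (n l : ℕ)
    (hdvd : 2 ^ l ∣ n) (β₂ : ℝ) (hβ₂ : β₂ ∈ Set.Ico (0 : ℝ) 1)
    (C : ℝ)
    (G : ℕ → Matrix (Fin m) (Fin n) ℝ)
    (hGC : ∀ s, ‖G s‖ ≤ C)
    (Gtil : ℕ → Matrix (Fin m) (Fin (n / 2 ^ l)) ℝ)
    (hGtil : ∀ s, Gtil s = G s * foldA n l)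
    (Vtil : ℕ → Matrix (Fin m) (Fin (n / 2 ^ l)) ℝ)
    (hVtil0 : Vtil 0 = 0)
    (hVtilrec : ∀ s, 1 ≤ s → Vtil s = β₂ • Vtil (s - 1) + (1 - β₂) • (Gtil s ⊙ Gtil s))
    (R : ℕ → Matrix (Fin m) (Fin n) ℝ)
    (hR : ∀ s, R s = G s - Gtil s * unfoldE n l)
    (V : ℕ → Matrix (Fin m) (Fin n) ℝ)
    (hV : ∀ s, V s = Vtil s * unfoldE n l + R s ⊙ R s)
    (u : ℕ) :
    ‖V u‖ ≤ 2 * C ^ 2 := by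
  have hC : 0 ≤ C := (norm_nonneg _).trans (hGC 0)
  have hGtil_sq (s : ℕ) : ‖Gtil s‖ ^ 2 ≤ C ^ 2 / 2 ^ l := by
    rw [le_div_iff₀' (by positivity), hGtil s]
    exact (two_pow_mul_frobenius_norm_mul_foldA_sq_le hdvd (G s)).trans (by gcongr; exact hGC s)
  have hVtil : ‖Vtil u‖ ≤ C ^ 2 / 2 ^ l := by
    refine mem_closedBall_zero_iff.1 <| (convex_closedBall _ _).mem_of_ema
      (Set.Ico_subset_Icc_self hβ₂) ?_ (fun s => ?_) hVtilrec u
    · rw [hVtil0]; exact Metric.mem_closedBall_self (by positivity)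
    · rw [mem_closedBall_zero_iff]
      exact (frobenius_norm_hadamard_le _ _).trans (sq (‖Gtil s‖) ▸ hGtil_sq s)
  have hVE : ‖Vtil u * unfoldE n l‖ ≤ C ^ 2 := by
    refine (sq_le_sq₀ (norm_nonneg _) (by positivity)).1 ?_
    calc ‖Vtil u * unfoldE n l‖ ^ 2 = 2 ^ l * ‖Vtil u‖ ^ 2 := frobenius_norm_mul_unfoldE_sq hdvd _
      _ ≤ 2 ^ l * (C ^ 2 / 2 ^ l) ^ 2 := by gcongr
      _ = (C ^ 2) ^ 2 / 2 ^ l := by field_simp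
      _ ≤ (C ^ 2) ^ 2 := div_le_self (by positivity) (one_le_pow₀ one_le_two)
  have hRR : ‖R u ⊙ R u‖ ≤ C ^ 2 := by
    have hRu : ‖R u‖ ≤ C := by
      rw [hR, hGtil, Matrix.mul_assoc, ← foldP]
      exact (frobenius_norm_sub_mul_foldP_le hdvd _).trans (hGC u)
    calc ‖R u ⊙ R u‖ ≤ ‖R u‖ * ‖R u‖ := frobenius_norm_hadamard_le _ _
      _ ≤ C ^ 2 := by rw [sq]; gcongr
  calc ‖V u‖ ≤ ‖Vtil u * unfoldE n l‖ + ‖R u ⊙ R u‖ := hV u ▸ norm_add_le _ _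
    _ ≤ 2 * C ^ 2 := by linarith

/-- Bound on the reconstructed second moment: if `‖G_s‖ ≤ C` for all `s` (Frobenius norm),
then with `G̃_s = G_s A^(l)`, `Ṽ_0 = 0`, `Ṽ_s = β₂ Ṽ_{s−1} + (1−β₂) (G̃_s ⊙ G̃_s)`,
`R_u = G_u − G̃_u E^(l)` and `V_u = Ṽ_u E^(l) + R_u ⊙ R_u` (entrywise product),
we have `‖V_u‖ ≤ 2C²` for every `u ≥ 1`. -/
theorem foam_second_moment_bound {m : ℕ} (n l : ℕ) (hn : 0 < n) (hl : 0 < l)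
    (hdvd : 2 ^ l ∣ n) (β₂ : ℝ) (hβ₂ : β₂ ∈ Set.Ico (0 : ℝ) 1)
    (C : ℝ) (hC : 0 ≤ C)
    (G : ℕ → Matrix (Fin m) (Fin n) ℝ)
    (hGC : ∀ s, ‖G s‖ ≤ C)
    (Gtil : ℕ → Matrix (Fin m) (Fin (n / 2 ^ l)) ℝ)
    (hGtil : ∀ s, Gtil s = G s * foldA n l)
    (Vtil : ℕ → Matrix (Fin m) (Fin (n / 2 ^ l)) ℝ)
    (hVtil0 : Vtil 0 = 0)
    (hVtilrec : ∀ s, 1 ≤ s → Vtil s = β₂ • Vtil (s - 1) + (1 - β₂) • (Gtil s ⊙ Gtil s))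
    (R : ℕ → Matrix (Fin m) (Fin n) ℝ)
    (hR : ∀ s, R s = G s - Gtil s * unfoldE n l)
    (V : ℕ → Matrix (Fin m) (Fin n) ℝ)
    (hV : ∀ s, V s = Vtil s * unfoldE n l + R s ⊙ R s)
    (u : ℕ) (hu : 1 ≤ u) :
    ‖V u‖ ≤ 2 * C ^ 2 :=
  foam_second_moment_bound_general n l hdvd β₂ hβ₂ C G hGC Gtil hGtil Vtil hVtil0 hVtilrec R hR V hV
    u
end

section
/- Let L ≥ 0, β₁ ∈ [0,1), K ≥ 0, and let f : ℝ^{m×n} → ℝ be differentiable with L-Lipschitz gradient in Frobenius norm, i.e., ‖∇f(W) − ∇f(W')‖ ≤ L‖W − W'‖ for all W, W'. Let (W_u)_{u≥1} be a sequence of m×n matrices with ‖W_{u+1} − W_u‖ ≤ η_u·K for all u, where η_u = η₀/√u with η₀ > 0. Let n, l be positive integers with 2^l dividing n and P^(l) = A^(l)E^(l). Then for every t ≥ 2, the history term H_t = (1−β₁)·Σ_{j=1}^{t−1} β₁^j·(∇f(W_{t−j}) − ∇f(W_t))·P^(l) satisfies ‖H_t‖ ≤ L·K·Σ_{u=1}^{t−1}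 η_u·β₁^{t−u}. -/
open scoped Matrix

-- Equip matrices with the Frobenius norm (and the corresponding inner product).
attribute [local instance] Matrix.frobeniusNormedAddCommGroup Matrix.frobeniusNormedSpace
  Matrix.frobeniusIsBoundedSMul

noncomputable local instance matrixFrobeniusInner (m n : ℕ) :
    InnerProductSpace ℝ (Matrix (Fin m) (Fin n) ℝ) where
  inner x y := inner ℝ
    (WithLp.toLp 2 (fun i => WithLp.toLp 2 (x i)) : PiLp 2 fun _ : Fin m => PiLp 2 fun _ : Fin n => ℝ)
    (WithLp.toLp 2 (fun i => WithLp.toLp 2 (y i)) : PiLp 2 fun _ : Fin m => PiLp 2 fun _ : Fin n => ℝ)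
  norm_sq_eq_re_inner x := norm_sq_eq_re_inner (𝕜 := ℝ)
    (WithLp.toLp 2 (fun i => WithLp.toLp 2 (x i)) : PiLp 2 fun _ : Fin m => PiLp 2 fun _ : Fin n => ℝ)
  conj_inner_symm x y := inner_conj_symm _ _
  add_left x y z := inner_add_left (𝕜 := ℝ)
    (WithLp.toLp 2 (fun i => WithLp.toLp 2 (x i)) : PiLp 2 fun _ : Fin m => PiLp 2 fun _ : Fin n => ℝ)
    (WithLp.toLp 2 (fun i => WithLp.toLp 2 (y i)) : PiLp 2 fun _ : Fin m => PiLp 2 fun _ : Fin n => ℝ)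
    (WithLp.toLp 2 (fun i => WithLp.toLp 2 (z i)) : PiLp 2 fun _ : Fin m => PiLp 2 fun _ : Fin n => ℝ)
  smul_left x y r := inner_smul_left (𝕜 := ℝ)
    (WithLp.toLp 2 (fun i => WithLp.toLp 2 (x i)) : PiLp 2 fun _ : Fin m => PiLp 2 fun _ : Fin n => ℝ)
    (WithLp.toLp 2 (fun i => WithLp.toLp 2 (y i)) : PiLp 2 fun _ : Fin m => PiLp 2 fun _ : Fin n => ℝ) r

/-! The rows of `E^(l)` are indicators of disjoint blocks of length `2^l`, so `E Eᵀ = 2^l • 1`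
and `P^(l) = 2^{-l} Eᵀ E` is symmetric and idempotent: right multiplication by `P^(l)` is an
orthogonal projection for the Frobenius inner product and does not increase the norm. The
Lipschitz bound and the triangle inequality along `W_{t-j}, …, W_t` bound the `j`-th summand by
`L K Σ_{u=t-j}^{t-1} η_u`; after exchanging the sums, `η_u` carries the weight
`(1 - β₁) Σ_{j=t-u}^{t-1} β₁^j = β₁^{t-u} - β₁^t ≤ β₁^{t-u}`. -/

open Finset

lemma foldA_eq_smul_transpose (n l : ℕ) : foldA n l = ((2 : ℝ) ^ l)⁻¹ • (unfoldE n l)ᵀ := by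
  ext i j
  simp only [foldA, unfoldE, Matrix.transpose_apply, Matrix.smul_apply, Matrix.of_apply,
    smul_eq_mul]
  split <;> simp

lemma unfoldE_mul_transpose (n l : ℕ) : unfoldE n l * (unfoldE n l)ᵀ = (2 : ℝ) ^ l • 1 := by
  ext i k
  have hblock : ∀ x : ℕ, ((i : ℕ) * 2 ^ l ≤ x ∧ x < ((i : ℕ) + 1) * 2 ^ l) ∧
      ((k : ℕ) * 2 ^ l ≤ x ∧ x < ((k : ℕ) + 1) * 2 ^ l) ↔
      i = k ∧ x ∈ Ico ((i : ℕ) * 2 ^ l) (((i : ℕ) + 1) * 2 ^ l) := by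
    intro x
    rw [mem_Ico, Fin.ext_iff]
    constructor
    · rintro ⟨hi, hk⟩
      exact ⟨(Nat.div_eq_of_lt_le hi.1 hi.2).symm.trans (Nat.div_eq_of_lt_le hk.1 hk.2), hi⟩
    · rintro ⟨hik, hi⟩
      exact ⟨hi, hik ▸ hi⟩
  have hsub : Ico ((i : ℕ) * 2 ^ l) (((i : ℕ) + 1) * 2 ^ l) ⊆ range n := by
    have : ((i : ℕ) + 1) * 2 ^ l ≤ n :=
      (Nat.mul_le_mul_right _ i.2).trans (Nat.div_mul_le_self n (2 ^ l))
    intro x hx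
    rw [mem_Ico] at hx
    exact mem_range.2 (by omega)
  have hterm : ∀ x : Fin n, unfoldE n l i x * unfoldE n l k x =
      if i = k ∧ (x : ℕ) ∈ Ico ((i : ℕ) * 2 ^ l) (((i : ℕ) + 1) * 2 ^ l) then 1 else 0 := by
    intro x
    simp only [unfoldE, Matrix.of_apply, ite_zero_mul_ite_zero, hblock, mul_one]
  simp only [Matrix.mul_apply, Matrix.transpose_apply, hterm, ite_and, Matrix.smul_apply,
    Matrix.one_apply, smul_eq_mul]
  split_ifs
  · rw [Fin.sum_univ_eq_sum_range (fun x => if x ∈ Ico _ _ then (1 : ℝ) else 0), sum_ite_mem,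
      inter_eq_right.2 hsub, sum_const, Nat.card_Ico, ← Nat.sub_mul, Nat.add_sub_cancel_left]
    simp
  · simp

lemma foldP_transpose (n l : ℕ) : (foldP n l)ᵀ = foldP n l := by
  simp only [foldP, foldA_eq_smul_transpose, Matrix.smul_mul, Matrix.transpose_smul,
    Matrix.transpose_mul, Matrix.transpose_transpose]

lemma isIdempotentElem_foldP (n l : ℕ) : IsIdempotentElem (foldP n l) := by
  have hE := unfoldE_mul_transpose n l
  simp only [IsIdempotentElem, foldP, foldA_eq_smul_transpose, Matrix.smul_mul,
    Matrix.mul_smul, smul_smul, Matrix.mul_assoc, ← Matrix.mul_assoc (unfoldE n l), hE]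
  simp

lemma frobenius_inner_eq_trace {m n : ℕ} (X Y : Matrix (Fin m) (Fin n) ℝ) :
    inner ℝ X Y = (Xᵀ * Y).trace := by
  simp only [Inner.inner, Matrix.trace, Matrix.diag, Matrix.mul_apply, Matrix.transpose_apply]
  rw [sum_comm]
  exact sum_congr rfl fun _ _ => sum_congr rfl fun _ _ => mul_comm _ _

lemma frobenius_norm_mul_le_of_isIdempotentElem {m n : ℕ} (M : Matrix (Fin m) (Fin n) ℝ)
    {P : Matrix (Fin n) (Fin n) ℝ} (hsymm : Pᵀ = P) (hidem : IsIdempotentElem P) :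
    ‖M * P‖ ≤ ‖M‖ := by
  have horth : inner ℝ (M * P) (M - M * P) = 0 := by
    rw [frobenius_inner_eq_trace, Matrix.transpose_mul, hsymm, Matrix.mul_sub, Matrix.trace_sub,
      sub_eq_zero]
    calc (P * Mᵀ * M).trace = (P * P * Mᵀ * M).trace := by rw [hidem.eq]
      _ = (P * Mᵀ * M * P).trace := by
        rw [Matrix.mul_assoc P P, Matrix.mul_assoc P (P * Mᵀ), Matrix.trace_mul_comm P]
      _ = (P * Mᵀ * (M * P)).trace := by rw [Matrix.mul_assoc (P * Mᵀ)]
  have hpyth := norm_add_sq_eq_norm_sq_add_norm_sq_real horth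
  rw [add_sub_cancel] at hpyth
  exact (mul_self_le_mul_self_iff (norm_nonneg _) (norm_nonneg _)).2
    (hpyth ▸ le_add_of_nonneg_right (mul_self_nonneg _))

lemma one_sub_mul_sum_pow_mul_sum_Ico_le {β : ℝ} (hβ : 0 ≤ β) (c : ℕ → ℝ) (t : ℕ)
    (hc : ∀ u ∈ Icc 1 (t - 1), 0 ≤ c u) :
    (1 - β) * ∑ j ∈ Icc 1 (t - 1), β ^ j * ∑ u ∈ Ico (t - j) t, c u ≤
      ∑ u ∈ Icc 1 (t - 1), c u * β ^ (t - u) := by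
  have hswap : ∑ j ∈ Icc 1 (t - 1), β ^ j * ∑ u ∈ Ico (t - j) t, c u =
      ∑ u ∈ Icc 1 (t - 1), c u * ∑ j ∈ Ico (t - u) t, β ^ j := by
    simp only [mul_sum]
    rw [sum_comm' (t' := Icc 1 (t - 1)) (s' := fun u => Ico (t - u) t) fun j u => by
      simp only [mem_Icc, mem_Ico]; omega]
    exact sum_congr rfl fun _ _ => sum_congr rfl fun _ _ => mul_comm _ _
  rw [hswap, mul_sum]
  refine sum_le_sum fun u hu => ?_
  calc (1 - β) * (c u * ∑ j ∈ Ico (t - u) t, β ^ j) = c u * (β ^ (t - u) - β ^ t) := by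
        rw [← geom_sum_Ico_mul_neg β (Nat.sub_le t u)]; ring
    _ ≤ c u * β ^ (t - u) :=
        mul_le_mul_of_nonneg_left (sub_le_self _ (pow_nonneg hβ t)) (hc u hu)

lemma norm_one_sub_smul_sum_pow_smul_le {V : Type*} [SeminormedAddCommGroup V] [NormedSpace ℝ V]
    {β : ℝ} (hβ0 : 0 ≤ β) (hβ1 : β ≤ 1) (X : ℕ → V) (c : ℕ → ℝ) (t : ℕ)
    (hc : ∀ u ∈ Icc 1 (t - 1), 0 ≤ c u)
    (hX : ∀ j ∈ Icc 1 (t - 1), ‖X j‖ ≤ ∑ u ∈ Ico (t - j) t, c u) :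
    ‖(1 - β) • ∑ j ∈ Icc 1 (t - 1), β ^ j • X j‖ ≤
      ∑ u ∈ Icc 1 (t - 1), c u * β ^ (t - u) := by
  calc ‖(1 - β) • ∑ j ∈ Icc 1 (t - 1), β ^ j • X j‖
      ≤ (1 - β) * ∑ j ∈ Icc 1 (t - 1), β ^ j * ∑ u ∈ Ico (t - j) t, c u := by
        rw [norm_smul, Real.norm_of_nonneg (sub_nonneg.2 hβ1)]
        refine mul_le_mul_of_nonneg_left ((norm_sum_le _ _).trans (sum_le_sum fun j hj => ?_))
          (sub_nonneg.2 hβ1)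
        rw [norm_smul, Real.norm_of_nonneg (pow_nonneg hβ0 j)]
        exact mul_le_mul_of_nonneg_left (hX j hj) (pow_nonneg hβ0 j)
    _ ≤ ∑ u ∈ Icc 1 (t - 1), c u * β ^ (t - u) :=
      one_sub_mul_sum_pow_mul_sum_Ico_le hβ0 c t hc

lemma norm_sub_le_mul_sum_norm_succ_sub {E F : Type*} [SeminormedAddCommGroup E]
    [SeminormedAddCommGroup F] {G : E → F} {L : ℝ} (hL : 0 ≤ L)
    (hG : ∀ x y, ‖G x - G y‖ ≤ L * ‖x - y‖) (W : ℕ → E) {a b : ℕ} (hab : a ≤ b) :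
    ‖G (W a) - G (W b)‖ ≤ L * ∑ u ∈ Ico a b, ‖W (u + 1) - W u‖ := by
  refine (hG _ _).trans (mul_le_mul_of_nonneg_left ?_ hL)
  simp only [← dist_eq_norm, dist_comm (W (_ + 1))]
  exact dist_le_Ico_sum_dist W hab

theorem foam_history_term_bound_general {m : ℕ} (n l : ℕ) (L K η₀ β₁ : ℝ) (hL : 0 ≤ L)
    (hβ₁ : β₁ ∈ Set.Ico (0 : ℝ) 1)
    (gradf : Matrix (Fin m) (Fin n) ℝ → Matrix (Fin m) (Fin n) ℝ)
    (hLip : ∀ W W', ‖gradf W - gradf W'‖ ≤ L * ‖W - W'‖)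
    (W : ℕ → Matrix (Fin m) (Fin n) ℝ)
    (hW : ∀ u, 1 ≤ u → ‖W (u + 1) - W u‖ ≤ (η₀ / Real.sqrt u) * K)
    (t : ℕ) :
    ‖(1 - β₁) • ∑ j ∈ Finset.Icc 1 (t - 1),
        β₁ ^ j • ((gradf (W (t - j)) - gradf (W t)) * foldP n l)‖ ≤
      L * K * ∑ u ∈ Finset.Icc 1 (t - 1), (η₀ / Real.sqrt u) * β₁ ^ (t - u) := by
  have hstep : ∀ u ∈ Icc 1 (t - 1), ‖W (u + 1) - W u‖ ≤ (η₀ / Real.sqrt u) * K :=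
    fun u hu => hW u (mem_Icc.1 hu).1
  have hc : ∀ u ∈ Icc 1 (t - 1), 0 ≤ L * ((η₀ / Real.sqrt u) * K) :=
    fun u hu => mul_nonneg hL ((norm_nonneg _).trans (hstep u hu))
  have hX : ∀ j ∈ Icc 1 (t - 1), ‖(gradf (W (t - j)) - gradf (W t)) * foldP n l‖ ≤
      ∑ u ∈ Ico (t - j) t, L * ((η₀ / Real.sqrt u) * K) := by
    intro j hj
    have hwindow : Ico (t - j) t ⊆ Icc 1 (t - 1) := fun u hu => by
      simp only [mem_Ico, mem_Icc] at hj hu ⊢; omega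
    calc ‖(gradf (W (t - j)) - gradf (W t)) * foldP n l‖
        ≤ ‖gradf (W (t - j)) - gradf (W t)‖ :=
          frobenius_norm_mul_le_of_isIdempotentElem _ (foldP_transpose n l)
            (isIdempotentElem_foldP n l)
      _ ≤ L * ∑ u ∈ Ico (t - j) t, ‖W (u + 1) - W u‖ :=
          norm_sub_le_mul_sum_norm_succ_sub hL hLip W (Nat.sub_le t j)
      _ ≤ ∑ u ∈ Ico (t - j) t, L * ((η₀ / Real.sqrt u) * K) := by
          rw [mul_sum]
          exact sum_le_sum fun u hu => mul_le_mul_of_nonneg_left (hstep u (hwindow hu)) hL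
  calc _ ≤ ∑ u ∈ Icc 1 (t - 1), L * ((η₀ / Real.sqrt u) * K) * β₁ ^ (t - u) :=
        norm_one_sub_smul_sum_pow_smul_le hβ₁.1 hβ₁.2.le _ _ t hc hX
    _ = L * K * ∑ u ∈ Icc 1 (t - 1), (η₀ / Real.sqrt u) * β₁ ^ (t - u) := by
        rw [mul_sum]
        exact sum_congr rfl fun _ _ => by ring

/-- History-term bound: let `f` be differentiable with gradient `∇f` that is `L`-Lipschitz in
Frobenius norm, let `(W_u)` satisfy `‖W_{u+1} − W_u‖ ≤ η_u K` with `η_u = η₀/√u`, and let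
`P^(l) = A^(l) E^(l)`. Then for `t ≥ 2` the history term
`H_t = (1−β₁) Σ_{j=1}^{t−1} β₁^j (∇f(W_{t−j}) − ∇f(W_t)) P^(l)` satisfies
`‖H_t‖ ≤ L K Σ_{u=1}^{t−1} η_u β₁^{t−u}`. -/
theorem foam_history_term_bound {m : ℕ} (n l : ℕ) (hn : 0 < n) (hl : 0 < l)
    (hdvd : 2 ^ l ∣ n) (L K η₀ β₁ : ℝ) (hL : 0 ≤ L) (hK : 0 ≤ K) (hη₀ : 0 < η₀)
    (hβ₁ : β₁ ∈ Set.Ico (0 : ℝ) 1)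
    (f : Matrix (Fin m) (Fin n) ℝ → ℝ)
    (gradf : Matrix (Fin m) (Fin n) ℝ → Matrix (Fin m) (Fin n) ℝ)
    (hf : ∀ W, HasGradientAt f (gradf W) W)
    (hLip : ∀ W W', ‖gradf W - gradf W'‖ ≤ L * ‖W - W'‖)
    (W : ℕ → Matrix (Fin m) (Fin n) ℝ)
    (hW : ∀ u, 1 ≤ u → ‖W (u + 1) - W u‖ ≤ (η₀ / Real.sqrt u) * K)
    (t : ℕ) (ht : 2 ≤ t) :
    ‖(1 - β₁) • ∑ j ∈ Finset.Icc 1 (t - 1),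
        β₁ ^ j • ((gradf (W (t - j)) - gradf (W t)) * foldP n l)‖ ≤
      L * K * ∑ u ∈ Finset.Icc 1 (t - 1), (η₀ / Real.sqrt u) * β₁ ^ (t - u) :=
  foam_history_term_bound_general n l L K η₀ β₁ hL hβ₁ gradf hLip W hW t
end
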